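/- arXiv:2311.07208 — 2 statements merged into one kernel-verified Lean document; each statement's English description precedes it below -/
import Mathlib

section
/- Let (X,T) be a Polish dynamical system. If x and y are quasi-regular points (i.e., their sequences of empirical measures m_T(x,n), m_T(y,n) converge weakly to measures μ_x, μ_y respectively), then Ē(x,y) = γ(μ_x, μ_y), where Ē is the mean orbital pseudo-metric and γ is the Kantorovich–Rubinshtein metric. -/
open MeasureTheory Filter Topology
open scoped ENNReal NNReal

section Defs

variable {X : Type*} [MetricSpace X] [MeasurableSpace X] [BorelSpace X]

/-- Kantorovich–Rubinshtein (dual-Lipschitz) distance between two measures: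
the supremum of `|∫ f dμ - ∫ f dν|` over bounded `f` with Lipschitz constant at most `1`. -/
noncomputable def krDist (μ ν : Measure X) : ℝ :=
  sSup { r : ℝ | ∃ f : X → ℝ, LipschitzWith 1 f ∧ (∃ C, ∀ x, |f x| ≤ C) ∧
    r = |∫ x, f x ∂μ - ∫ x, f x ∂ν| }

/-- Empirical measure of the first `n` terms of a sequence (as a plain measure). -/
noncomputable def empMeas (x : ℕ → X) (n : ℕ) : Measure X :=
  (n : ℝ≥0∞)⁻¹ • ∑ i ∈ Finset.range n, Measure.dirac (x i)

/-- Average of the Dirac measures at the first `max n 1` points of a sequence, as a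
probability measure.  For `n ≥ 1` this is the `n`-th empirical measure. -/
noncomputable def avgDirac (x : ℕ → X) (n : ℕ) : ProbabilityMeasure X :=
  ⟨((max n 1 : ℕ) : ℝ≥0∞)⁻¹ • ∑ i ∈ Finset.range (max n 1), Measure.dirac (x i), by
    constructor
    have h : (∑ i ∈ Finset.range (max n 1), Measure.dirac (x i)) Set.univ
        = ((max n 1 : ℕ) : ℝ≥0∞) := by
      simp [Measure.finset_sum_apply]
    rw [Measure.smul_apply, h, smul_eq_mul]
    exact ENNReal.inv_mul_cancel (by simp) (by simp)⟩

/-- The set of weak* limit points of the empirical measures of a sequence. -/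
def limitMeasures (x : ℕ → X) : Set (ProbabilityMeasure X) :=
  { μ | ∃ φ : ℕ → ℕ, StrictMono φ ∧ Tendsto (fun k => avgDirac x (φ k)) atTop (𝓝 μ) }

/-- `x` is a generic point for `μ`: the empirical measures along the orbit of `x`
converge to `μ` in the weak* topology. -/
def genericFor (T : X → X) (x : X) (μ : ProbabilityMeasure X) : Prop :=
  Tendsto (fun n => avgDirac (fun i => T^[i] x) n) atTop (𝓝 μ)

/-- The invariant measure supported on the periodic orbit of `x` of period `p`. -/
noncomputable def periodicOrbitMeasure (T : X → X) (x : X) (p : ℕ) : ProbabilityMeasure X :=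
  avgDirac (fun i => T^[i] x) p

/-- The set of invariant measures supported on periodic orbits of points of `K`. -/
def perMeasures (T : X → X) (K : Set X) : Set (ProbabilityMeasure X) :=
  { μ | ∃ x ∈ K, ∃ p, 0 < p ∧ T^[p] x = x ∧ μ = periodicOrbitMeasure T x p }

/-- The mean orbital pseudo-metric `Ē`. -/
noncomputable def meanOrbitalDist (T : X → X) (x y : X) : ℝ :=
  limsup (fun n => ⨅ σ : Equiv.Perm (Fin n),
    (∑ i : Fin n, dist (T^[(i : ℕ)] x) (T^[((σ i : Fin n) : ℕ)] y)) / n) atTop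

/-- `x` is an asymptotic average pseudo-orbit for `T`. -/
def IsAAPO (T : X → X) (x : ℕ → X) : Prop :=
  Tendsto (fun n => (∑ i ∈ Finset.range n, dist (T (x i)) (x (i + 1))) / n) atTop (𝓝 0)

/-- The point `x` is `K`-closable. -/
def ClosableAt (T : X → X) (K : Set X) (x : X) : Prop :=
  ∀ ε > (0 : ℝ), ∀ N : ℕ, ∃ p q : ℕ, 0 < p ∧ N ≤ p ∧ p ≤ q ∧ (q : ℝ) ≤ (1 + ε) * p ∧
    ∃ y ∈ K, T^[q] y = y ∧ ∀ i < p, dist (T^[i] y) (T^[i] x) < ε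

/-- The set `K ⊆ Per(T)` is linkable. -/
def Linkable (T : X → X) (K : Set X) : Prop :=
  ∀ y₁ ∈ K, ∀ y₂ ∈ K, ∀ ε > (0 : ℝ), ∀ lam ∈ Set.Icc (0 : ℝ) 1,
    ∃ p₁ p₂ q₁ q₂ : ℕ, 0 < p₁ ∧ 0 < p₂ ∧ T^[p₁] y₁ = y₁ ∧ T^[p₂] y₂ = y₂ ∧
      ∃ z ∈ K, T^[q₂] z = z ∧
        lam - ε ≤ (p₁ : ℝ) / (p₁ + p₂) ∧ (p₁ : ℝ) / (p₁ + p₂) ≤ lam + ε ∧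
        p₁ ≤ q₁ ∧ (q₁ : ℝ) ≤ (1 + ε) * p₁ ∧ (∀ i < p₁, dist (T^[i] z) (T^[i] y₁) < ε) ∧
        p₂ ≤ q₂ - q₁ ∧ ((q₂ - q₁ : ℕ) : ℝ) ≤ (1 + ε) * p₂ ∧
        (∀ i < p₂, dist (T^[i + q₁] z) (T^[i] y₂) < ε)

/-- `(X,T)` has the asymptotic orbital average shadowing property. -/
def AOASP (T : X → X) : Prop :=
  ∀ x : ℕ → X, IsAAPO T x → ∃ z : X,
    Tendsto (fun n => ⨅ σ : Equiv.Perm (Fin n),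
      (∑ i : Fin n, dist (x (i : ℕ)) (T^[((σ i : Fin n) : ℕ)] z)) / n) atTop (𝓝 0)

end Defs

/-!
Both sides are compared through integrals of bounded `1`-Lipschitz functions `f`. For every
matching `σ`, `|∑ f (u i) - ∑ f (v (σ i))|` is at most the matching cost, which gives `γ ≤ Ē` in
the limit. Conversely, an optimal matching of `n` points is certified by a single `1`-Lipschitz
`f` (discrete Kantorovich duality: by optimality the reduced costs have no negative cycle, so
shortest-path weights are potentials), making the matching cost equal to
`∫ f dm(u,n) - ∫ f dm(v,n)`. The Lévy–Prokhorov metric, which metrizes weak convergence on a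
separable space, controls these integrals uniformly over such `f`, which gives `Ē ≤ γ`.
-/

open Finset BoundedContinuousFunction

section Potential

variable {α : Type*}

def pathWeight (w : α → α → ℝ) : List α → ℝ
  | a :: b :: l => w a b + pathWeight w (b :: l)
  | _ => 0

@[simp] lemma pathWeight_nil (w : α → α → ℝ) : pathWeight w [] = 0 := rfl

@[simp] lemma pathWeight_singleton (w : α → α → ℝ) (a : α) : pathWeight w [a] = 0 := rfl

@[simp] lemma pathWeight_cons_cons (w : α → α → ℝ) (a b : α) (l : List α) :
    pathWeight w (a :: b :: l) = w a b + pathWeight w (b :: l) := rfl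

lemma pathWeight_cons_of_head?_eq (w : α → α → ℝ) (a b : α) {l : List α}
    (h : l.head? = some b) : pathWeight w (a :: l) = w a b + pathWeight w l := by
  obtain _ | ⟨c, l⟩ := l
  · simp at h
  · obtain rfl : c = b := by simpa using h
    rfl

lemma pathWeight_append_cons (w : α → α → ℝ) (l : List α) (a : α) (r : List α) :
    pathWeight w (l ++ a :: r) = pathWeight w (l ++ [a]) + pathWeight w (a :: r) := by
  induction l with
  | nil => simp
  | cons b l ih =>
    obtain _ | ⟨c, l⟩ := l
    · simp
    · simp only [List.cons_append, pathWeight_cons_cons] at ih ⊢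
      rw [ih, add_assoc]

lemma pathWeight_eq_sum_range (w : α → α → ℝ) (d : α) (l : List α) :
    pathWeight w l = ∑ k ∈ range (l.length - 1), w (l.getD k d) (l.getD (k + 1) d) := by
  induction l with
  | nil => simp
  | cons a l ih =>
    obtain _ | ⟨b, l⟩ := l
    · simp
    · rw [pathWeight_cons_cons, ih]
      simp [sum_range_succ', add_comm]

lemma sum_map_eq_sum_range_getD {β : Type*} [AddCommMonoid β] (g : α → β) (d : α)
    (l : List α) : (l.map g).sum = ∑ k ∈ range l.length, g (l.getD k d) := by
  induction l with
  | nil => simp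
  | cons a l ih => simp [ih, sum_range_succ', add_comm]

lemma sum_map_formPerm_eq_pathWeight [DecidableEq α] (w : α → α → ℝ) (a : α) (l : List α)
    (hl : (a :: l).Nodup) :
    ((a :: l).map fun i => w i ((a :: l).formPerm i)).sum = pathWeight w (a :: l ++ [a]) := by
  rw [sum_map_eq_sum_range_getD _ a, pathWeight_eq_sum_range w a]
  simp only [List.length_append, List.length_cons, List.length_nil, Nat.add_sub_cancel]
  refine sum_congr rfl fun k hk => ?_
  have hk : k < l.length + 1 := mem_range.mp hk
  rw [List.getD_eq_getElem _ _ hk, List.formPerm_apply_getElem _ hl _ hk,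
    List.getD_eq_getElem _ _ (by simp; omega), List.getElem_append_left (by simpa using hk)]
  congr 1
  obtain hk' | hk' := Nat.lt_or_ge (k + 1) (l.length + 1)
  · simp only [List.length_cons, Nat.mod_eq_of_lt hk']
    rw [List.getD_eq_getElem _ _ (by simp; omega), List.getElem_append_left]
  · obtain rfl : k = l.length := by omega
    simp

/-- The least weight of a simple path from `i` is a potential: a path from `j` through `i` splits
into a cycle through `i` and `j`, of nonnegative weight, and a path from `i`. -/
lemma exists_potential_of_pathWeight_cycle_nonneg [Fintype α] (w : α → α → ℝ)
    (hw : ∀ a l, (a :: l).Nodup → 0 ≤ pathWeight w (a :: l ++ [a])) :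
    ∃ t : α → ℝ, ∀ i j, t i ≤ t j + w i j := by
  classical
  set S : α → Set ℝ := fun i => pathWeight w '' {l | l.Nodup ∧ l.head? = some i}
  have hS_fin : ∀ i, (S i).Finite := fun i =>
    ((List.finite_length_le α (Fintype.card α)).subset fun l hl => hl.1.length_le_card).image _
  have hS_nonempty : ∀ i, (S i).Nonempty := fun i => ⟨_, [i], by simp, rfl⟩
  have hS_le : ∀ i l, l.Nodup → l.head? = some i → sInf (S i) ≤ pathWeight w l :=
    fun i l hl hli => csInf_le (hS_fin i).bddBelow ⟨l, ⟨hl, hli⟩, rfl⟩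
  refine ⟨fun i => sInf (S i), fun i j => ?_⟩
  obtain ⟨L, ⟨hL, hLj⟩, hL_min⟩ := (hS_nonempty j).csInf_mem (hS_fin j)
  simp only [← hL_min]
  by_cases hiL : i ∈ L
  · obtain ⟨P, R, rfl⟩ := List.append_of_mem hiL
    have h_path := hS_le i (i :: R) hL.of_append_right (by simp)
    obtain ⟨l, hl⟩ : ∃ l, P ++ [i] = j :: l := by
      obtain _ | ⟨p, P⟩ := P
      · obtain rfl : i = j := by simpa using hLj
        exact ⟨[], rfl⟩
      · obtain rfl : p = j := by simpa using hLj
        exact ⟨P ++ [i], rfl⟩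
    have h_cycle := hw j l (hl ▸ hL.sublist (by simp))
    rw [← hl, List.append_assoc, List.singleton_append, pathWeight_append_cons] at h_cycle
    rw [pathWeight_append_cons]
    simp only [pathWeight_cons_cons, pathWeight_singleton, add_zero] at h_cycle
    linarith
  · have h_path := hS_le i (i :: L) (List.nodup_cons.mpr ⟨hiL, hL⟩) rfl
    rw [pathWeight_cons_of_head?_eq w i j hLj] at h_path
    linarith

lemma pathWeight_cycle_nonneg_of_sum_le_sum_perm [Fintype α] [DecidableEq α] (c : α → α → ℝ)
    (hc : ∀ τ : Equiv.Perm α, ∑ i, c i i ≤ ∑ i, c i (τ i)) (a : α) (l : List α)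
    (hl : (a :: l).Nodup) : 0 ≤ pathWeight (fun i j => c i j - c i i) (a :: l ++ [a]) := by
  rw [← sum_map_formPerm_eq_pathWeight _ _ _ hl, ← List.sum_toFinset _ hl,
    sum_subset (subset_univ _) fun i _ hi => by
      rw [List.formPerm_apply_of_notMem (by simpa using hi), sub_self],
    sum_sub_distrib, sub_nonneg]
  exact hc _

end Potential

/-- Discrete Kantorovich duality. For an optimal `σ`, potentials `t` of the cost
`dist (a i) (b (σ j))` give the certificate `f z = min_j (t j + dist z (b (σ j)))`. -/
theorem exists_lipschitzWith_sum_dist_le_sum_sub {ι X : Type*} [Fintype ι] [Nonempty ι]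
    [PseudoMetricSpace X] (a b : ι → X) :
    ∃ σ : Equiv.Perm ι, ∃ f : X → ℝ, LipschitzWith 1 f ∧
      ∑ i, dist (a i) (b (σ i)) ≤ ∑ i, f (a i) - ∑ i, f (b i) := by
  classical
  obtain ⟨σ, -, hσ⟩ := exists_min_image univ (fun σ : Equiv.Perm ι => ∑ i, dist (a i) (b (σ i)))
    univ_nonempty
  set c : ι → ι → ℝ := fun i j => dist (a i) (b (σ j))
  obtain ⟨t, ht⟩ := exists_potential_of_pathWeight_cycle_nonneg _
    (pathWeight_cycle_nonneg_of_sum_le_sum_perm c fun τ => hσ (σ * τ) (mem_univ _))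
  set f : X → ℝ := fun z => univ.inf' univ_nonempty fun j => t j + dist z (b (σ j))
  have hf_lip : LipschitzWith 1 f := LipschitzWith.of_le_add fun z z' => by
    obtain ⟨j, -, hj⟩ := exists_mem_eq_inf' univ_nonempty fun j => t j + dist z' (b (σ j))
    calc f z ≤ t j + dist z (b (σ j)) := inf'_le _ (mem_univ j)
      _ ≤ t j + dist z' (b (σ j)) + dist z z' := by linarith [dist_triangle z z' (b (σ j))]
      _ = f z' + dist z z' := by rw [← hj]
  have hf_b : ∀ i, f (b (σ i)) ≤ t i := fun i => by
    simpa using inf'_le (fun j => t j + dist (b (σ i)) (b (σ j))) (mem_univ i)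
  have hf_a : ∀ i, t i + c i i ≤ f (a i) := fun i =>
    le_inf' _ _ fun j _ => by linarith [ht i j]
  refine ⟨σ, f, hf_lip, ?_⟩
  rw [← Equiv.sum_comp σ fun i => f (b i)]
  have := sum_le_sum fun i (_ : i ∈ univ) => hf_a i
  have := sum_le_sum fun i (_ : i ∈ univ) => hf_b i
  rw [sum_add_distrib] at *
  linarith

lemma abs_sum_sub_sum_le_sum_dist {ι X : Type*} [Fintype ι] [PseudoMetricSpace X] {f : X → ℝ}
    (hf : LipschitzWith 1 f) (a b : ι → X) (σ : Equiv.Perm ι) :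
    |∑ i, f (a i) - ∑ i, f (b i)| ≤ ∑ i, dist (a i) (b (σ i)) := by
  rw [← Equiv.sum_comp σ fun i => f (b i), ← sum_sub_distrib]
  refine (abs_sum_le_sum_abs _ _).trans (sum_le_sum fun i _ => ?_)
  simpa [Real.dist_eq] using hf.dist_le_mul (a i) (b (σ i))

section OptMatchingCost

variable {X : Type*} [PseudoMetricSpace X] {u v : ℕ → X} {n : ℕ}

noncomputable def optMatchingCost (u v : ℕ → X) (n : ℕ) : ℝ :=
  ⨅ σ : Equiv.Perm (Fin n), (∑ i : Fin n, dist (u i) (v (σ i))) / n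

lemma optMatchingCost_nonneg : 0 ≤ optMatchingCost u v n :=
  le_ciInf fun _ => by positivity

lemma optMatchingCost_le (σ : Equiv.Perm (Fin n)) :
    optMatchingCost u v n ≤ (∑ i : Fin n, dist (u i) (v (σ i))) / n :=
  ciInf_le ⟨0, by rintro _ ⟨τ, rfl⟩; positivity⟩ σ

lemma optMatchingCost_le_of_dist_le {C : ℝ} (hC : ∀ a b : X, dist a b ≤ C) :
    optMatchingCost u v n ≤ C := by
  have hC0 : 0 ≤ C := dist_nonneg.trans (hC (u 0) (u 0))
  refine (optMatchingCost_le 1).trans (div_le_of_le_mul₀ n.cast_nonneg hC0 ?_)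
  simpa [mul_comm] using sum_le_sum fun (i : Fin n) (_ : i ∈ univ) => hC (u i) (v i)

end OptMatchingCost

section EmpiricalMeasure

variable {X : Type*} [MetricSpace X] [MeasurableSpace X] [BorelSpace X] {u v : ℕ → X} {n : ℕ}

lemma integral_avgDirac (f : X →ᵇ ℝ) (hn : 0 < n) :
    ∫ z, f z ∂(avgDirac u n : Measure X) = (∑ i ∈ range n, f (u i)) / n := by
  change ∫ z, f z ∂(((max n 1 : ℕ) : ℝ≥0∞)⁻¹ • ∑ i ∈ range (max n 1), Measure.dirac (u i)) = _
  rw [max_eq_left hn, integral_smul_measure,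
    integral_finsetSum_measure fun i _ => f.integrable _]
  simp [integral_dirac, div_eq_inv_mul]

lemma abs_integral_avgDirac_sub_le_optMatchingCost (f : X →ᵇ ℝ) (hf : LipschitzWith 1 f)
    (hn : 0 < n) :
    |∫ z, f z ∂(avgDirac u n : Measure X) - ∫ z, f z ∂(avgDirac v n : Measure X)|
      ≤ optMatchingCost u v n := by
  refine le_ciInf fun σ => ?_
  rw [integral_avgDirac f hn, integral_avgDirac f hn, ← sub_div, abs_div, Nat.abs_cast,
    ← Fin.sum_univ_eq_sum_range (fun i => f (u i)), ← Fin.sum_univ_eq_sum_range (fun i => f (v i))]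
  exact div_le_div_of_nonneg_right
    (abs_sum_sub_sum_le_sum_dist hf (fun i : Fin n => u i) (fun i : Fin n => v i) σ) n.cast_nonneg

lemma exists_optMatchingCost_le_integral_avgDirac_sub {C : ℝ} (hC : ∀ a b : X, dist a b ≤ C)
    (hn : 0 < n) :
    ∃ f : X →ᵇ ℝ, LipschitzWith 1 f ∧ ‖f‖ ≤ C ∧ optMatchingCost u v n
      ≤ ∫ z, f z ∂(avgDirac u n : Measure X) - ∫ z, f z ∂(avgDirac v n : Measure X) := by
  have : NeZero n := ⟨hn.ne'⟩
  obtain ⟨σ, g, hg, hσ⟩ :=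
    exists_lipschitzWith_sum_dist_le_sum_sub (fun i : Fin n => u i) (fun i : Fin n => v i)
  -- Normalizing `g` to vanish at `u 0` bounds it by the diameter without changing the sums.
  have hg_bound : ∀ z, ‖g z - g (u 0)‖ ≤ C := fun z => by
    simpa [Real.dist_eq] using (hg.dist_le_mul z (u 0)).trans (by simpa using hC z (u 0))
  set f := ofNormedAddCommGroup (fun z => g z - g (u 0)) (hg.continuous.sub continuous_const)
    C hg_bound
  refine ⟨f, LipschitzWith.of_le_add fun z z' => ?_,
    norm_ofNormedAddCommGroup_le _ (dist_nonneg.trans (hC (u 0) (u 0))) hg_bound, ?_⟩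
  · simp only [f, coe_ofNormedAddCommGroup]
    linarith [show g z ≤ g z' + dist z z' by simpa using hg.le_add_mul z z']
  rw [integral_avgDirac f hn, integral_avgDirac f hn, ← sub_div]
  refine (optMatchingCost_le σ).trans (div_le_div_of_nonneg_right ?_ n.cast_nonneg)
  simpa [f, Fin.sum_univ_eq_sum_range (fun i => g (u i)),
    Fin.sum_univ_eq_sum_range (fun i => g (v i))] using hσ

end EmpiricalMeasure

section LevyProkhorov

open Metric

lemma integrableOn_Ioc_measureReal_of_antitone {Ω : Type*} [MeasurableSpace Ω] {ν : Measure Ω}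
    [IsFiniteMeasure ν] {s : ℝ → Set Ω} (hs : Antitone s) (a b : ℝ) :
    IntegrableOn (fun t => ν.real (s t)) (Set.Ioc a b) := by
  have : Antitone fun t => ν.real (s t) := fun _ _ hst => measureReal_mono (hs hst)
  exact ((this.antitoneOn _).integrableOn_isCompact isCompact_Icc).mono_set
    Set.Ioc_subset_Icc_self

variable {Ω : Type*} [PseudoMetricSpace Ω] [MeasurableSpace Ω] [OpensMeasurableSpace Ω]
  {μ ν : Measure Ω} [IsProbabilityMeasure μ] [IsProbabilityMeasure ν] {ε : ℝ}

/-- By the layer-cake formula; the `ε`-thickening of `{t ≤ f}` lies in `{t ≤ f + ε}`. -/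
lemma integral_sub_le_of_levyProkhorovEDist_lt (hε : 0 < ε)
    (h : levyProkhorovEDist μ ν < ENNReal.ofReal ε) (f : Ω →ᵇ ℝ) (hf : LipschitzWith 1 f)
    (hf0 : ∀ z, 0 ≤ f z) : ∫ z, f z ∂μ - ∫ z, f z ∂ν ≤ ε * (1 + ‖f‖) := by
  set g : Ω →ᵇ ℝ := f + const Ω ε
  have hg : ∀ z, g z = f z + ε := fun _ => rfl
  have hfg : ‖f‖ ≤ ‖g‖ := (norm_le (norm_nonneg g)).mpr fun z => by
    rw [Real.norm_of_nonneg (hf0 z)]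
    exact (le_add_of_nonneg_right hε.le).trans ((le_abs_self _).trans (g.norm_coe_le_norm z))
  have h_thick : ∀ t, thickening ε {z | t ≤ f z} ⊆ {z | t ≤ g z} := fun t z hz => by
    obtain ⟨z', hz', hzz'⟩ := mem_thickening_iff.mp hz
    have := hf.le_add_mul z' z
    simp only [Set.mem_ofPred_eq, NNReal.coe_one, one_mul, hg] at hz' this ⊢
    linarith [dist_comm z z']
  have h_anti : Antitone fun t : ℝ => {z | t ≤ g z} := fun _ _ hst _ h => hst.trans h
  have h_int : ∀ b, IntegrableOn (fun t => ν.real {z | t ≤ g z}) (Set.Ioc 0 b) :=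
    integrableOn_Ioc_measureReal_of_antitone h_anti 0
  have h_layer₁ : (∫ t in Set.Ioc 0 ‖f‖, ν.real (thickening ε {z | t ≤ f z}))
      ≤ ∫ t in Set.Ioc 0 ‖f‖, ν.real {z | t ≤ g z} := by
    refine setIntegral_mono_on ?_ (h_int _) measurableSet_Ioc fun t _ => ?_
    · exact integrableOn_Ioc_measureReal_of_antitone
        (s := fun t => thickening ε {z | t ≤ f z})
        (fun a b hab => thickening_subset_of_subset ε fun z (hz : b ≤ f z) => hab.trans hz) _ _
    · exact measureReal_mono (h_thick t)
  have h_layer₂ : (∫ t in Set.Ioc 0 ‖f‖, ν.real {z | t ≤ g z})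
      ≤ ∫ t in Set.Ioc 0 ‖g‖, ν.real {z | t ≤ g z} :=
    setIntegral_mono_set (h_int _) (.of_forall fun _ => measureReal_nonneg)
      (Set.Ioc_subset_Ioc_right hfg).eventuallyLE
  have h_int_g : ∫ t in Set.Ioc 0 ‖g‖, ν.real {z | t ≤ g z} = ∫ z, f z ∂ν + ε := by
    rw [← integral_eq_integral_meas_le g ν (.of_forall fun z => by
        simp only [Pi.zero_apply, hg]; linarith [hf0 z]),
      integral_congr_ae (.of_forall hg), integral_add (f.integrable ν) (integrable_const ε)]
    simp
  linarith [integral_le_of_levyProkhorovEDist_lt μ ν hε h f (.of_forall hf0)]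

lemma abs_integral_sub_le_of_levyProkhorovEDist_lt (hε : 0 < ε)
    (h : levyProkhorovEDist μ ν < ENNReal.ofReal ε) (f : Ω →ᵇ ℝ) (hf : LipschitzWith 1 f) :
    |∫ z, f z ∂μ - ∫ z, f z ∂ν| ≤ ε * (1 + 2 * ‖f‖) := by
  set g : Ω →ᵇ ℝ := f + const Ω ‖f‖
  have hg : ∀ z, g z = f z + ‖f‖ := fun _ => rfl
  have hg0 : ∀ z, 0 ≤ g z := fun z => by
    rw [hg]; linarith [neg_le_of_abs_le (f.norm_coe_le_norm z)]
  have hg_norm : ‖g‖ ≤ 2 * ‖f‖ :=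
    (norm_add_le _ _).trans (by simpa [two_mul] using norm_const_le (α := Ω) ‖f‖)
  have hg_lip : LipschitzWith 1 g := LipschitzWith.of_dist_le_mul fun z z' => by
    simpa [hg, dist_add_right] using hf.dist_le_mul z z'
  have h_int : ∀ (ρ : Measure Ω) [IsProbabilityMeasure ρ], ∫ z, g z ∂ρ = ∫ z, f z ∂ρ + ‖f‖ :=
    fun ρ _ => by
      rw [integral_congr_ae (.of_forall hg), integral_add (f.integrable ρ) (integrable_const _)]
      simp
  have h₁ := integral_sub_le_of_levyProkhorovEDist_lt hε h g hg_lip hg0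
  have h₂ := integral_sub_le_of_levyProkhorovEDist_lt hε (levyProkhorovEDist_comm μ ν ▸ h) g
    hg_lip hg0
  rw [h_int μ, h_int ν] at h₁ h₂
  have : ε * (1 + ‖g‖) ≤ ε * (1 + 2 * ‖f‖) := by gcongr
  exact abs_le.mpr ⟨by linarith, by linarith⟩

lemma Filter.Tendsto.eventually_levyProkhorovEDist_lt [TopologicalSpace.SeparableSpace Ω]
    {ι : Type*} {l : Filter ι} {P : ι → ProbabilityMeasure Ω} {P₀ : ProbabilityMeasure Ω}
    (hP : Tendsto P l (𝓝 P₀)) (hε : 0 < ε) :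
    ∀ᶠ i in l, levyProkhorovEDist (P i : Measure Ω) P₀ < ENNReal.ofReal ε := by
  have := (LevyProkhorov.probabilityMeasureHomeomorph.continuous.tendsto P₀).comp hP
  filter_upwards [Metric.tendsto_nhds.mp this ε hε] with i hi
  rwa [Function.comp_apply, LevyProkhorov.dist_probabilityMeasure_def, levyProkhorovDist,
    ← ENNReal.lt_ofReal_iff_toReal_lt (levyProkhorovEDist_ne_top _ _)] at hi

end LevyProkhorov

section KantorovichRubinshtein

variable {X : Type*} [MetricSpace X] [MeasurableSpace X] [BorelSpace X] {C : ℝ}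

lemma abs_integral_sub_le_two_mul_of_dist_le (hC : ∀ a b : X, dist a b ≤ C) (μ ν : Measure X)
    [IsProbabilityMeasure μ] [IsProbabilityMeasure ν] (f : X →ᵇ ℝ) (hf : LipschitzWith 1 f) :
    |∫ z, f z ∂μ - ∫ z, f z ∂ν| ≤ 2 * C := by
  obtain ⟨x₀⟩ := nonempty_of_isProbabilityMeasure μ
  have h_near : ∀ (ρ : Measure X) [IsProbabilityMeasure ρ], |∫ z, f z ∂ρ - f x₀| ≤ C :=
    fun ρ _ => by
      have := norm_integral_le_of_norm_le_const (μ := ρ) (f := fun z => f z - f x₀) (C := C)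
        (.of_forall fun z => by
          simpa [Real.dist_eq] using (hf.dist_le_mul z x₀).trans (by simpa using hC z x₀))
      simpa [integral_sub (f.integrable ρ) (integrable_const _)] using this
  have := abs_le.mp (h_near μ)
  have := abs_le.mp (h_near ν)
  exact abs_le.mpr ⟨by linarith, by linarith⟩

lemma abs_integral_sub_le_krDist (hC : ∀ a b : X, dist a b ≤ C) (μ ν : Measure X)
    [IsProbabilityMeasure μ] [IsProbabilityMeasure ν] (f : X →ᵇ ℝ) (hf : LipschitzWith 1 f) :
    |∫ z, f z ∂μ - ∫ z, f z ∂ν| ≤ krDist μ ν := by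
  refine le_csSup ⟨2 * C, ?_⟩ ⟨f, hf, ⟨‖f‖, f.norm_coe_le_norm⟩, rfl⟩
  rintro _ ⟨g, hg, ⟨B, hB⟩, rfl⟩
  exact abs_integral_sub_le_two_mul_of_dist_le hC μ ν
    (ofNormedAddCommGroup g hg.continuous B hB) hg

variable {u v : ℕ → X} {μ ν : ProbabilityMeasure X}

lemma abs_integral_sub_le_limsup_optMatchingCost (hC : ∀ a b : X, dist a b ≤ C)
    (hu : Tendsto (avgDirac u) atTop (𝓝 μ)) (hv : Tendsto (avgDirac v) atTop (𝓝 ν))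
    (f : X →ᵇ ℝ) (hf : LipschitzWith 1 f) :
    |∫ z, f z ∂(μ : Measure X) - ∫ z, f z ∂(ν : Measure X)|
      ≤ limsup (optMatchingCost u v) atTop := by
  have h_lim := ((ProbabilityMeasure.tendsto_iff_forall_integral_tendsto.mp hu f).sub
    (ProbabilityMeasure.tendsto_iff_forall_integral_tendsto.mp hv f)).abs
  rw [← h_lim.limsup_eq]
  exact limsup_le_limsup
    (eventually_atTop.mpr ⟨1, fun n hn => abs_integral_avgDirac_sub_le_optMatchingCost f hf hn⟩)
    h_lim.isBoundedUnder_ge.isCoboundedUnder_le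
    (isBoundedUnder_of ⟨C, fun _ => optMatchingCost_le_of_dist_le hC⟩)

lemma krDist_le_limsup_optMatchingCost (hC : ∀ a b : X, dist a b ≤ C)
    (hu : Tendsto (avgDirac u) atTop (𝓝 μ)) (hv : Tendsto (avgDirac v) atTop (𝓝 ν)) :
    krDist (μ : Measure X) ν ≤ limsup (optMatchingCost u v) atTop := by
  refine Real.sSup_le ?_ <| le_limsup_of_frequently_le
    (.of_forall fun _ => optMatchingCost_nonneg)
    (isBoundedUnder_of ⟨C, fun _ => optMatchingCost_le_of_dist_le hC⟩)
  rintro _ ⟨g, hg, ⟨B, hB⟩, rfl⟩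
  exact abs_integral_sub_le_limsup_optMatchingCost hC hu hv
    (ofNormedAddCommGroup g hg.continuous B hB) hg

lemma limsup_optMatchingCost_le_krDist [TopologicalSpace.SeparableSpace X]
    (hC : ∀ a b : X, dist a b ≤ C)
    (hu : Tendsto (avgDirac u) atTop (𝓝 μ)) (hv : Tendsto (avgDirac v) atTop (𝓝 ν)) :
    limsup (optMatchingCost u v) atTop ≤ krDist (μ : Measure X) ν := by
  have hC0 : 0 ≤ C := dist_nonneg.trans (hC (u 0) (u 0))
  refine le_of_forall_pos_le_add fun ε hε => ?_
  set δ := ε / (2 * (1 + 2 * C))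
  have hδ : 0 < δ := by positivity
  refine limsup_le_of_le (isCoboundedUnder_le_of_le atTop fun _ => optMatchingCost_nonneg) ?_
  filter_upwards [hu.eventually_levyProkhorovEDist_lt hδ, hv.eventually_levyProkhorovEDist_lt hδ,
    eventually_gt_atTop 0] with n hun hvn hn
  obtain ⟨f, hf, hfC, h_cost⟩ :=
    exists_optMatchingCost_le_integral_avgDirac_sub (u := u) (v := v) hC hn
  obtain ⟨-, hu'⟩ := abs_le.mp (abs_integral_sub_le_of_levyProkhorovEDist_lt hδ hun f hf)
  obtain ⟨hv', -⟩ := abs_le.mp (abs_integral_sub_le_of_levyProkhorovEDist_lt hδ hvn f hf)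
  have h_kr := le_of_abs_le (abs_integral_sub_le_krDist hC μ ν f hf)
  have h_err : δ * (1 + 2 * ‖f‖) ≤ ε / 2 := by
    calc δ * (1 + 2 * ‖f‖) ≤ δ * (1 + 2 * C) := by gcongr
      _ = ε / 2 := by simp only [δ]; field_simp
  linarith

theorem limsup_optMatchingCost_eq_krDist [TopologicalSpace.SeparableSpace X]
    (hC : ∀ a b : X, dist a b ≤ C)
    (hu : Tendsto (avgDirac u) atTop (𝓝 μ)) (hv : Tendsto (avgDirac v) atTop (𝓝 ν)) :
    limsup (optMatchingCost u v) atTop = krDist (μ : Measure X) ν :=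
  (limsup_optMatchingCost_le_krDist hC hu hv).antisymm
    (krDist_le_limsup_optMatchingCost hC hu hv)

end KantorovichRubinshtein

theorem stmt2_general {X : Type*} [MetricSpace X] [TopologicalSpace.SeparableSpace X]
    [MeasurableSpace X] [BorelSpace X]
    (hd : ∃ C, ∀ a b : X, dist a b ≤ C)
    (T : X → X) (x y : X) (μx μy : ProbabilityMeasure X)
    (hx : genericFor T x μx) (hy : genericFor T y μy) :
    meanOrbitalDist T x y = krDist μx.toMeasure μy.toMeasure := by
  obtain ⟨C, hC⟩ := hd
  exact limsup_optMatchingCost_eq_krDist (u := (T^[·] x)) (v := (T^[·] y)) hC hx hy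

theorem stmt2 {X : Type*} [MetricSpace X] [TopologicalSpace.SeparableSpace X]
    [CompleteSpace X] [MeasurableSpace X] [BorelSpace X]
    (hd : ∃ C, ∀ a b : X, dist a b ≤ C)
    (T : X → X) (hT : Continuous T) (x y : X) (μx μy : ProbabilityMeasure X)
    (hx : genericFor T x μx) (hy : genericFor T y μy) :
    meanOrbitalDist T x y = krDist μx.toMeasure μy.toMeasure :=
  stmt2_general hd T x y μx μy hx hy
end

section
/- Let X be a Polish space with bounded compatible complete metric d and let {x_i}, {y_i} be sequences in X such that the set V({x_i}) of weak* limit points of the empirical measures (1/n)Σ_{i=0}^{n-1} δ_{x_i} is non-empty. If lim_{n→∞} min_{σ∈S_n} (1/n) Σ_{i=0}^{n-1} d(x_i, y_{σ(i)}) = 0, then V({x_i}) = V({y_i}). -/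
open MeasureTheory Filter Topology
open scoped ENNReal NNReal

/-!
Matching the first `n` terms of `x` with those of `y` by a permutation `σ` shows that, for an
`L`-Lipschitz `f`, the empirical averages of `f` along `x` and along `y` differ by at most `L`
times the optimal matching cost. So if that cost tends to `0`, the two sequences of empirical
measures have the same limits along every subsequence against bounded Lipschitz test functions,
which already characterise weak convergence of probability measures.
-/

section MatchingCost

variable {X : Type*}

theorem integral_avgDirac_s14 [MeasurableSpace X] [MeasurableSingletonClass X]
    {E : Type*} [NormedAddCommGroup E] [NormedSpace ℝ E] [CompleteSpace E]
    (x : ℕ → X) {n : ℕ} (hn : n ≠ 0) (g : X → E) :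
    ∫ z, g z ∂(avgDirac x n : Measure X) = (n : ℝ)⁻¹ • ∑ i ∈ Finset.range n, g (x i) := by
  have hmax : max n 1 = n := max_eq_left (Nat.one_le_iff_ne_zero.mpr hn)
  change ∫ z, g z ∂(((max n 1 : ℕ) : ℝ≥0∞)⁻¹ • ∑ i ∈ Finset.range (max n 1), _) = _
  rw [hmax, integral_smul_measure,
    integral_finsetSum_measure fun i _ => integrable_dirac enorm_lt_top]
  simp only [integral_dirac, ENNReal.toReal_inv, ENNReal.toReal_natCast]

variable [PseudoMetricSpace X]

theorem LipschitzWith.abs_sum_sub_sum_le {ι : Type*} [Fintype ι] {L : ℝ≥0} {g : X → ℝ}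
    (hg : LipschitzWith L g) (σ : Equiv.Perm ι) (x y : ι → X) :
    |∑ i, g (x i) - ∑ i, g (y i)| ≤ L * ∑ i, dist (x i) (y (σ i)) := by
  rw [← Equiv.sum_comp σ (fun i => g (y i)), ← Finset.sum_sub_distrib, Finset.mul_sum]
  refine (Finset.abs_sum_le_sum_abs _ _).trans (Finset.sum_le_sum fun i _ => ?_)
  rw [← Real.dist_eq]
  exact hg.dist_le_mul _ _

noncomputable def matchingCost (x y : ℕ → X) (n : ℕ) : ℝ :=
  ⨅ σ : Equiv.Perm (Fin n), (∑ i : Fin n, dist (x (i : ℕ)) (y ((σ i : Fin n) : ℕ))) / n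

theorem matchingCost_comm (x y : ℕ → X) (n : ℕ) : matchingCost x y n = matchingCost y x n := by
  refine Equiv.iInf_congr (Equiv.inv _) fun σ => ?_
  rw [← Equiv.sum_comp σ]
  simp [dist_comm]

theorem LipschitzWith.abs_integral_avgDirac_sub_le
    [MeasurableSpace X] [MeasurableSingletonClass X]
    {L : ℝ≥0} {g : X → ℝ} (hg : LipschitzWith L g) (x y : ℕ → X) {n : ℕ} (hn : n ≠ 0) :
    |∫ z, g z ∂(avgDirac x n : Measure X) - ∫ z, g z ∂(avgDirac y n : Measure X)|
      ≤ L * matchingCost x y n := by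
  have hn' : (0 : ℝ) < n := by positivity
  simp only [integral_avgDirac_s14 _ hn, smul_eq_mul, ← mul_sub, abs_mul, abs_inv, Nat.abs_cast,
    ← Fin.sum_univ_eq_sum_range (fun i => g (x i)),
    ← Fin.sum_univ_eq_sum_range (fun i => g (y i))]
  rw [matchingCost, Real.mul_iInf_of_nonneg L.coe_nonneg]
  refine le_ciInf fun σ => ?_
  rw [inv_mul_eq_div, mul_div_assoc', div_le_div_iff_of_pos_right hn']
  exact hg.abs_sum_sub_sum_le σ _ _

end MatchingCost

section LimitMeasures

variable {X : Type*} [MetricSpace X] [MeasurableSpace X]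

theorem tendsto_avgDirac_of_tendsto_matchingCost [OpensMeasurableSpace X] {ι : Type*}
    {l : Filter ι} [l.IsCountablyGenerated] {x y : ℕ → X} {φ : ι → ℕ} {μ : ProbabilityMeasure X}
    (hφ : Tendsto φ l atTop) (hxy : Tendsto (matchingCost x y) atTop (𝓝 0))
    (hx : Tendsto (fun i => avgDirac x (φ i)) l (𝓝 μ)) :
    Tendsto (fun i => avgDirac y (φ i)) l (𝓝 μ) := by
  rw [tendsto_iff_forall_lipschitz_integral_tendsto] at hx ⊢
  rintro g hg_bdd ⟨L, hg⟩
  have hcost : Tendsto (fun i => L * matchingCost x y (φ i)) l (𝓝 0) := by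
    simpa using (hxy.comp hφ).const_mul (L : ℝ)
  have hdiff : Tendsto (fun i => ∫ z, g z ∂(avgDirac y (φ i) : Measure X)
      - ∫ z, g z ∂(avgDirac x (φ i) : Measure X)) l (𝓝 0) := by
    refine squeeze_zero_norm' ?_ hcost
    filter_upwards [hφ.eventually_ne_atTop 0] with i hi
    rw [Real.norm_eq_abs, abs_sub_comm]
    exact hg.abs_integral_avgDirac_sub_le x y hi
  simpa using (hx g hg_bdd ⟨L, hg⟩).add hdiff

theorem limitMeasures_subset_of_tendsto_matchingCost [BorelSpace X] {x y : ℕ → X}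
    (hxy : Tendsto (matchingCost x y) atTop (𝓝 0)) : limitMeasures x ⊆ limitMeasures y :=
  fun _ ⟨φ, hφ, hx⟩ => ⟨φ, hφ, tendsto_avgDirac_of_tendsto_matchingCost hφ.tendsto_atTop hxy hx⟩

end LimitMeasures

theorem stmt14_general {X : Type*} [MetricSpace X]
    [MeasurableSpace X] [BorelSpace X]
    (x y : ℕ → X)
    (h : Tendsto (fun n => ⨅ σ : Equiv.Perm (Fin n),
      (∑ i : Fin n, dist (x (i : ℕ)) (y ((σ i : Fin n) : ℕ))) / n) atTop (𝓝 0)) :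
    limitMeasures x = limitMeasures y := by
  have hxy : Tendsto (matchingCost x y) atTop (𝓝 0) := h
  have hyx : Tendsto (matchingCost y x) atTop (𝓝 0) :=
    hxy.congr (matchingCost_comm x y)
  exact (limitMeasures_subset_of_tendsto_matchingCost hxy).antisymm
    (limitMeasures_subset_of_tendsto_matchingCost hyx)

theorem stmt14 {X : Type*} [MetricSpace X] [TopologicalSpace.SeparableSpace X]
    [CompleteSpace X] [MeasurableSpace X] [BorelSpace X]
    (hd : ∃ C, ∀ a b : X, dist a b ≤ C)
    (x y : ℕ → X) (hne : (limitMeasures x).Nonempty)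
    (h : Tendsto (fun n => ⨅ σ : Equiv.Perm (Fin n),
      (∑ i : Fin n, dist (x (i : ℕ)) (y ((σ i : Fin n) : ℕ))) / n) atTop (𝓝 0)) :
    limitMeasures x = limitMeasures y :=
  stmt14_general x y h
end
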